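/- Norm contraction of the modified outlier vector: let Q ∈ ℝ^{n×m} have orthonormal columns (QᵀQ = Iₘ), let u₀ ∈ ℝⁿ be s-sparse with support S, and let δ ∈ [0,1] satisfy the principal-angle bound for sparsity level s with δ² < min{|u₀ᵢ| : i ∈ S} / (2 ‖u₀‖₂). Then for every nonempty S_k ⊊ S, the matrix M_k = I_k − I_{S_k}ᵀQQᵀI_{S_k} is invertible and the vector v_k = F_{S∖S_k}(u₀) + I_{S_k} M_k⁻¹ I_{S_k}ᵀ Q Qᵀ F_{S∖S_k}(u₀) satisfies ‖v_k‖₂ < ‖u₀‖₂. -/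

import Mathlib

/-!
Write `a = F_{S∖S_k}(u₀)`, `c = I_{S_k}ᵀ Q Qᵀ a` and `d = M_k⁻¹ c`, so that `v_k = a + I_{S_k} d`
with orthogonal summands. The principal-angle bound makes `M_k` coercive with constant `1 - δ²`,
hence invertible with `(1 - δ²) ‖d‖ ≤ ‖c‖`, and it gives `‖c‖ ≤ δ ‖Qᵀ a‖ ≤ δ² ‖a‖ ≤ δ² ‖u₀‖`.
The hypothesis on `δ` forces `δ² < 1/2`, so `‖d‖ < 2 δ² ‖u₀‖ < min_S |u₀ᵢ| ≤ |u₀ⱼ|` for any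
`j ∈ S_k`, and therefore `‖v_k‖² = ‖a‖² + ‖d‖² < ‖a‖² + u₀ⱼ² ≤ ‖u₀‖²`.
-/

open Matrix

/-- Euclidean (ℓ₂) norm of a finitely-indexed real vector. -/
noncomputable def norm2 {ι : Type*} [Fintype ι] (v : ι → ℝ) : ℝ :=
  Real.sqrt (∑ i, v i ^ 2)

/-- A vector of `ℝⁿ` is `s`-sparse if it has at most `s` nonzero entries. -/
def Sparse {n : ℕ} (s : ℕ) (v : Fin n → ℝ) : Prop :=
  ∃ T : Finset (Fin n), T.card ≤ s ∧ ∀ i ∉ T, v i = 0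

/-- `δ` satisfies the principal-angle bound for `Q` at sparsity level `s`:
`|⟨Qw, v⟩| ≤ δ ‖Qw‖₂ ‖v‖₂` for every `w` and every `s`-sparse `v`. -/
def PABound {n m : ℕ} (Q : Matrix (Fin n) (Fin m) ℝ) (s : ℕ) (δ : ℝ) : Prop :=
  ∀ (w : Fin m → ℝ) (v : Fin n → ℝ), Sparse s v →
    |Q.mulVec w ⬝ᵥ v| ≤ δ * norm2 (Q.mulVec w) * norm2 v

/-- The `n × |S|` matrix `I_S` whose columns are the standard basis vectors `e_j`, `j ∈ S`. -/
def colSel {n : ℕ} (S : Finset (Fin n)) : Matrix (Fin n) {i // i ∈ S} ℝ :=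
  Matrix.of fun i j => if i = (j : Fin n) then 1 else 0

/-- `F_S(a) = I_S I_Sᵀ a`: the vector agreeing with `a` on `S` and zero elsewhere. -/
def restrictVec {n : ℕ} (S : Finset (Fin n)) (a : Fin n → ℝ) : Fin n → ℝ :=
  fun i => if i ∈ S then a i else 0

theorem le_of_sq_le_mul {a b : ℝ} (hb : 0 ≤ b) (h : a ^ 2 ≤ b * a) : a ≤ b := by
  nlinarith

section norm2

variable {ι : Type*} [Fintype ι]

theorem norm2_nonneg (v : ι → ℝ) : 0 ≤ norm2 v :=
  Real.sqrt_nonneg _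

theorem norm2_sq (v : ι → ℝ) : norm2 v ^ 2 = ∑ i, v i ^ 2 :=
  Real.sq_sqrt (Finset.sum_nonneg fun _ _ => sq_nonneg _)

theorem norm2_sq_eq_dotProduct (v : ι → ℝ) : norm2 v ^ 2 = v ⬝ᵥ v := by
  rw [norm2_sq]
  simp only [dotProduct, sq]

theorem dotProduct_le_norm2_mul_norm2 (v w : ι → ℝ) : v ⬝ᵥ w ≤ norm2 v * norm2 w := by
  simpa [dotProduct, norm2] using Real.sum_mul_le_sqrt_mul_sqrt Finset.univ v w

theorem abs_le_norm2 (v : ι → ℝ) (i : ι) : |v i| ≤ norm2 v := by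
  rw [norm2, ← Real.sqrt_sq_eq_abs]
  exact Real.sqrt_le_sqrt
    (Finset.single_le_sum (f := fun j => v j ^ 2) (fun _ _ => sq_nonneg _) (Finset.mem_univ i))

theorem norm2_add_sq_of_dotProduct_eq_zero {v w : ι → ℝ} (h : v ⬝ᵥ w = 0) :
    norm2 (v + w) ^ 2 = norm2 v ^ 2 + norm2 w ^ 2 := by
  simp only [norm2_sq_eq_dotProduct, add_dotProduct, dotProduct_add, h, dotProduct_comm w v]
  ring

theorem norm2_mulVec_of_transpose_mul_self {κ : Type*} [Fintype κ] [DecidableEq κ]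
    {A : Matrix ι κ ℝ} (hA : Aᵀ * A = 1) (w : κ → ℝ) : norm2 (A *ᵥ w) = norm2 w := by
  have h : norm2 (A *ᵥ w) ^ 2 = norm2 w ^ 2 := by
    rw [norm2_sq_eq_dotProduct, norm2_sq_eq_dotProduct, dotProduct_mulVec,
      ← mulVec_transpose, mulVec_mulVec, hA, one_mulVec]
  exact (pow_left_inj₀ (norm2_nonneg _) (norm2_nonneg _) two_ne_zero).mp h

end norm2

section coercive

variable {ι : Type*} [Fintype ι] {M : Matrix ι ι ℝ} {c : ℝ}

theorem mul_norm2_le_norm2_mulVec_of_coercive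
    (h : ∀ e, c * norm2 e ^ 2 ≤ e ⬝ᵥ M *ᵥ e) (e : ι → ℝ) : c * norm2 e ≤ norm2 (M *ᵥ e) := by
  rcases (norm2_nonneg e).eq_or_lt with he | he
  · rw [← he, mul_zero]
    exact norm2_nonneg _
  · refine le_of_mul_le_mul_right ?_ he
    calc c * norm2 e * norm2 e = c * norm2 e ^ 2 := by ring
      _ ≤ e ⬝ᵥ M *ᵥ e := h e
      _ ≤ norm2 e * norm2 (M *ᵥ e) := dotProduct_le_norm2_mul_norm2 _ _
      _ = norm2 (M *ᵥ e) * norm2 e := mul_comm _ _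

theorem isUnit_of_coercive [DecidableEq ι] (hc : 0 < c)
    (h : ∀ e, c * norm2 e ^ 2 ≤ e ⬝ᵥ M *ᵥ e) : IsUnit M := by
  refine (isUnit_iff_isUnit_det M).mpr (isUnit_iff_ne_zero.mpr fun hdet => ?_)
  obtain ⟨e, he, hMe⟩ := exists_mulVec_eq_zero_iff.mpr hdet
  have hle := h e
  rw [hMe, dotProduct_zero, norm2_sq_eq_dotProduct] at hle
  have hpos : 0 < e ⬝ᵥ e :=
    lt_of_le_of_ne (dotProduct_self_star_nonneg e) (Ne.symm (dotProduct_self_eq_zero.not.mpr he))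
  nlinarith

theorem mul_norm2_inv_mulVec_le_of_coercive [DecidableEq ι] (hc : 0 < c)
    (h : ∀ e, c * norm2 e ^ 2 ≤ e ⬝ᵥ M *ᵥ e) (y : ι → ℝ) : c * norm2 (M⁻¹ *ᵥ y) ≤ norm2 y := by
  have hdet := (isUnit_iff_isUnit_det M).mp (isUnit_of_coercive hc h)
  simpa only [mulVec_mulVec, mul_nonsing_inv _ hdet, one_mulVec]
    using mul_norm2_le_norm2_mulVec_of_coercive h (M⁻¹ *ᵥ y)

end coercive

section selection

variable {n : ℕ}

theorem colSel_mulVec_apply_of_notMem {T : Finset (Fin n)} {i : Fin n} (hi : i ∉ T)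
    (d : {i // i ∈ T} → ℝ) : (colSel T *ᵥ d) i = 0 :=
  Finset.sum_eq_zero fun j _ => by
    simp only [colSel, of_apply, if_neg (fun h : i = j => hi (h ▸ j.2)), zero_mul]

theorem colSel_transpose_mul_self (T : Finset (Fin n)) : (colSel T)ᵀ * colSel T = 1 := by
  ext j k
  rw [mul_apply, Fintype.sum_eq_single (j : Fin n)]
  · simp only [colSel, transpose_apply, of_apply, if_true, one_mul, one_apply]
    exact if_congr Subtype.ext_iff.symm rfl rfl
  · intro i hi
    simp [colSel, hi]

theorem sparse_colSel_mulVec {s : ℕ} {T : Finset (Fin n)} (hT : T.card ≤ s)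
    (d : {i // i ∈ T} → ℝ) : Sparse s (colSel T *ᵥ d) :=
  ⟨T, hT, fun _ hi => colSel_mulVec_apply_of_notMem hi d⟩

theorem sparse_restrictVec {s : ℕ} {T : Finset (Fin n)} (hT : T.card ≤ s) (a : Fin n → ℝ) :
    Sparse s (restrictVec T a) :=
  ⟨T, hT, fun _ hi => if_neg hi⟩

theorem restrictVec_dotProduct_colSel_mulVec {T T' : Finset (Fin n)} (h : Disjoint T T')
    (a : Fin n → ℝ) (d : {i // i ∈ T'} → ℝ) : restrictVec T a ⬝ᵥ colSel T' *ᵥ d = 0 :=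
  Finset.sum_eq_zero fun i _ => by
    by_cases hi : i ∈ T
    · rw [colSel_mulVec_apply_of_notMem (Finset.disjoint_left.mp h hi), mul_zero]
    · rw [restrictVec, if_neg hi, zero_mul]

theorem norm2_restrictVec_add_colSel_mulVec_sq {T T' : Finset (Fin n)} (h : Disjoint T T')
    (a : Fin n → ℝ) (d : {i // i ∈ T'} → ℝ) :
    norm2 (restrictVec T a + colSel T' *ᵥ d) ^ 2 = norm2 (restrictVec T a) ^ 2 + norm2 d ^ 2 := by
  rw [norm2_add_sq_of_dotProduct_eq_zero (restrictVec_dotProduct_colSel_mulVec h a d),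
    norm2_mulVec_of_transpose_mul_self (colSel_transpose_mul_self T')]

theorem norm2_restrictVec_sq_add_sq_le {T : Finset (Fin n)} {j : Fin n} (hj : j ∉ T)
    (u : Fin n → ℝ) : norm2 (restrictVec T u) ^ 2 + u j ^ 2 ≤ norm2 u ^ 2 := by
  have hT : norm2 (restrictVec T u) ^ 2 = ∑ i ∈ T, u i ^ 2 := by
    simp only [norm2_sq, restrictVec, ite_pow, zero_pow two_ne_zero, Finset.sum_ite_mem,
      Finset.univ_inter]
  have hjT : u j ^ 2 ≤ ∑ i ∈ Tᶜ, u i ^ 2 :=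
    Finset.single_le_sum (fun _ _ => sq_nonneg _) (Finset.mem_compl.mpr hj)
  rw [hT, norm2_sq, ← Finset.sum_add_sum_compl T]
  linarith

end selection

namespace PABound

variable {n m s : ℕ} {Q : Matrix (Fin n) (Fin m) ℝ} {δ : ℝ}

theorem norm2_transpose_mulVec_le (hPA : PABound Q s δ) (hQ : Qᵀ * Q = 1) (hδ : 0 ≤ δ)
    {x : Fin n → ℝ} (hx : Sparse s x) : norm2 (Qᵀ *ᵥ x) ≤ δ * norm2 x := by
  have h := hPA (Qᵀ *ᵥ x) x hx
  rw [norm2_mulVec_of_transpose_mul_self hQ, dotProduct_comm, dotProduct_mulVec,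
    ← mulVec_transpose, ← norm2_sq_eq_dotProduct, abs_sq] at h
  exact le_of_sq_le_mul (mul_nonneg hδ (norm2_nonneg _)) (by linarith)

theorem norm2_colSel_transpose_mulVec_le (hPA : PABound Q s δ) (hQ : Qᵀ * Q = 1) (hδ : 0 ≤ δ)
    {T : Finset (Fin n)} (hT : T.card ≤ s) (w : Fin m → ℝ) :
    norm2 ((colSel T)ᵀ *ᵥ (Q *ᵥ w)) ≤ δ * norm2 w := by
  have h := hPA w _ (sparse_colSel_mulVec hT ((colSel T)ᵀ *ᵥ (Q *ᵥ w)))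
  rw [norm2_mulVec_of_transpose_mul_self hQ, norm2_mulVec_of_transpose_mul_self
    (colSel_transpose_mul_self T), dotProduct_mulVec, ← mulVec_transpose,
    ← norm2_sq_eq_dotProduct, abs_sq] at h
  exact le_of_sq_le_mul (mul_nonneg hδ (norm2_nonneg _)) (by linarith)

theorem mul_norm2_sq_le_dotProduct_mulVec (hPA : PABound Q s δ) (hQ : Qᵀ * Q = 1)
    (hδ : 0 ≤ δ) {T : Finset (Fin n)} (hT : T.card ≤ s) (e : {i // i ∈ T} → ℝ) :
    (1 - δ ^ 2) * norm2 e ^ 2 ≤ e ⬝ᵥ (1 - (colSel T)ᵀ * Q * Qᵀ * colSel T) *ᵥ e := by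
  have hQe := hPA.norm2_transpose_mulVec_le hQ hδ (sparse_colSel_mulVec hT e)
  rw [norm2_mulVec_of_transpose_mul_self (colSel_transpose_mul_self T)] at hQe
  have hdot : e ⬝ᵥ (1 - (colSel T)ᵀ * Q * Qᵀ * colSel T) *ᵥ e =
      norm2 e ^ 2 - norm2 (Qᵀ *ᵥ (colSel T *ᵥ e)) ^ 2 := by
    rw [sub_mulVec, one_mulVec, dotProduct_sub, ← mulVec_mulVec, ← mulVec_mulVec,
      ← mulVec_mulVec, dotProduct_mulVec, vecMul_transpose, dotProduct_mulVec, ← mulVec_transpose,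
      ← norm2_sq_eq_dotProduct, ← norm2_sq_eq_dotProduct]
  rw [hdot]
  nlinarith [norm2_nonneg (Qᵀ *ᵥ (colSel T *ᵥ e)), norm2_nonneg e]

theorem norm2_colSel_transpose_mulVec_mulVec_transpose_le (hPA : PABound Q s δ)
    (hQ : Qᵀ * Q = 1) (hδ : 0 ≤ δ) {T : Finset (Fin n)} (hT : T.card ≤ s) {x : Fin n → ℝ}
    (hx : Sparse s x) : norm2 ((colSel T)ᵀ *ᵥ (Q *ᵥ (Qᵀ *ᵥ x))) ≤ δ ^ 2 * norm2 x :=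
  calc norm2 ((colSel T)ᵀ *ᵥ (Q *ᵥ (Qᵀ *ᵥ x))) ≤ δ * norm2 (Qᵀ *ᵥ x) :=
        hPA.norm2_colSel_transpose_mulVec_le hQ hδ hT _
    _ ≤ δ * (δ * norm2 x) := by gcongr; exact hPA.norm2_transpose_mulVec_le hQ hδ hx
    _ = δ ^ 2 * norm2 x := by ring

end PABound

theorem stmt12_general {n m s : ℕ} (Q : Matrix (Fin n) (Fin m) ℝ) (hQ : Qᵀ * Q = 1)
    (δ : ℝ) (hδ0 : 0 ≤ δ) (hPA : PABound Q s δ)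
    (u₀ : Fin n → ℝ) (S : Finset (Fin n))
    (hSne : S.Nonempty) (hcard : S.card ≤ s)
    (hbound : δ ^ 2 < S.inf' hSne (fun i => |u₀ i|) / (2 * norm2 u₀))
    (Sk : Finset (Fin n)) (hSkne : Sk.Nonempty) (hSkS : Sk ⊂ S)
    (Mk : Matrix {i // i ∈ Sk} {i // i ∈ Sk} ℝ)
    (hMk : Mk = 1 - (colSel Sk)ᵀ * Q * Qᵀ * colSel Sk)
    (vk : Fin n → ℝ)
    (hvk : vk = restrictVec (S \ Sk) u₀ +
      (colSel Sk).mulVec ((Mk⁻¹).mulVec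
        ((colSel Sk)ᵀ.mulVec (Q.mulVec (Qᵀ.mulVec (restrictVec (S \ Sk) u₀)))))) :
    IsUnit Mk ∧ norm2 vk < norm2 u₀ := by
  set a := restrictVec (S \ Sk) u₀
  set m₀ := S.inf' hSne (fun i => |u₀ i|)
  obtain ⟨j, hj⟩ := hSkne
  have hm₀ : m₀ ≤ |u₀ j| := Finset.inf'_le _ (hSkS.subset hj)
  -- `x / 0 = 0`, so for `u₀ = 0` the bound would read `δ ^ 2 < 0`
  have hU : 0 < norm2 u₀ := (norm2_nonneg u₀).lt_of_ne' fun h => by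
    rw [h, mul_zero, div_zero] at hbound
    exact (sq_nonneg δ).not_gt hbound
  have hδU : δ ^ 2 * (2 * norm2 u₀) < m₀ := (lt_div_iff₀ (by positivity)).mp hbound
  have hδ : δ ^ 2 < 1 / 2 := by nlinarith [abs_le_norm2 u₀ j]
  have hSk : Sk.card ≤ s := (Finset.card_le_card hSkS.subset).trans hcard
  have hco : ∀ e, (1 - δ ^ 2) * norm2 e ^ 2 ≤ e ⬝ᵥ Mk *ᵥ e :=
    hMk ▸ hPA.mul_norm2_sq_le_dotProduct_mulVec hQ hδ0 hSk
  refine ⟨isUnit_of_coercive (by linarith) hco, ?_⟩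
  have hau : norm2 a ^ 2 + u₀ j ^ 2 ≤ norm2 u₀ ^ 2 :=
    norm2_restrictVec_sq_add_sq_le (fun h => (Finset.mem_sdiff.mp h).2 hj) u₀
  set c := (colSel Sk)ᵀ *ᵥ (Q *ᵥ (Qᵀ *ᵥ a))
  set d := Mk⁻¹ *ᵥ c
  have hc : norm2 c ≤ δ ^ 2 * norm2 a :=
    hPA.norm2_colSel_transpose_mulVec_mulVec_transpose_le hQ hδ0 hSk
      (sparse_restrictVec ((Finset.card_le_card Finset.sdiff_subset).trans hcard) u₀)
  have hd : (1 - δ ^ 2) * norm2 d ≤ norm2 c :=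
    mul_norm2_inv_mulVec_le_of_coercive (by linarith) hco c
  have ha : norm2 a ≤ norm2 u₀ :=
    le_of_pow_le_pow_left₀ two_ne_zero (norm2_nonneg u₀) (by nlinarith [sq_nonneg (u₀ j)])
  have hdm : norm2 d < m₀ := by
    nlinarith [norm2_nonneg d, mul_le_mul_of_nonneg_left ha (sq_nonneg δ)]
  refine lt_of_pow_lt_pow_left₀ 2 (norm2_nonneg u₀) ?_
  rw [hvk, norm2_restrictVec_add_colSel_mulVec_sq Finset.sdiff_disjoint]
  nlinarith [norm2_nonneg d, sq_abs (u₀ j)]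

/-- Norm contraction of the modified outlier vector: under the GARD recovery condition
`δ² < min_{i ∈ S} |u₀ᵢ| / (2‖u₀‖₂)`, for every nonempty `S_k ⊊ S` the matrix
`M_k = I_k − I_{S_k}ᵀ Q Qᵀ I_{S_k}` is invertible and
`v_k = F_{S∖S_k}(u₀) + I_{S_k} M_k⁻¹ I_{S_k}ᵀ Q Qᵀ F_{S∖S_k}(u₀)` satisfies
`‖v_k‖₂ < ‖u₀‖₂`. -/
theorem stmt12 {n m s : ℕ} (Q : Matrix (Fin n) (Fin m) ℝ) (hQ : Qᵀ * Q = 1)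
    (δ : ℝ) (hδ0 : 0 ≤ δ) (hδ1 : δ ≤ 1) (hPA : PABound Q s δ)
    (u₀ : Fin n → ℝ) (S : Finset (Fin n)) (hsupp : ∀ i, i ∈ S ↔ u₀ i ≠ 0)
    (hSne : S.Nonempty) (hcard : S.card ≤ s)
    (hbound : δ ^ 2 < S.inf' hSne (fun i => |u₀ i|) / (2 * norm2 u₀))
    (Sk : Finset (Fin n)) (hSkne : Sk.Nonempty) (hSkS : Sk ⊂ S)
    (Mk : Matrix {i // i ∈ Sk} {i // i ∈ Sk} ℝ)
    (hMk : Mk = 1 - (colSel Sk)ᵀ * Q * Qᵀ * colSel Sk)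
    (vk : Fin n → ℝ)
    (hvk : vk = restrictVec (S \ Sk) u₀ +
      (colSel Sk).mulVec ((Mk⁻¹).mulVec
        ((colSel Sk)ᵀ.mulVec (Q.mulVec (Qᵀ.mulVec (restrictVec (S \ Sk) u₀)))))) :
    IsUnit Mk ∧ norm2 vk < norm2 u₀ :=
  stmt12_general Q hQ δ hδ0 hPA u₀ S hSne hcard hbound Sk hSkne hSkS Mk hMk vk hvk
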